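/- Let Σ be a finite alphabet and M = (S, R, V) a rational Kripke model over Σ in which additionally V(i) is a singleton subset of S for every nominal i. Then for every formula φ of the hybrid tense logic H_t(D), the extension [[φ]]_M is a regular language over Σ. -/

import Mathlib

/-- Rational binary relations on words, presented by a regular language over
`Option α × Option α` via the two asynchronous projections. -/
def IsRationalRel {α : Type} (R : Set (List α × List α)) : Prop :=
  ∃ L : Language (Option α × Option α), L.IsRegular ∧
    R = { p | ∃ z ∈ L, p = (z.filterMap Prod.fst, z.filterMap Prod.snd) }

/-- Formulas of the hybrid tense logic H_t(D) over atomic propositions `Φ`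
and nominals `Θ`. -/
inductive HtDForm (Φ Θ : Type) : Type where
  | atom : Φ → HtDForm Φ Θ
  | nom : Θ → HtDForm Φ Θ
  | neg : HtDForm Φ Θ → HtDForm Φ Θ
  | disj : HtDForm Φ Θ → HtDForm Φ Θ → HtDForm Φ Θ
  | dia : HtDForm Φ Θ → HtDForm Φ Θ
  | diaInv : HtDForm Φ Θ → HtDForm Φ Θ
  | diaD : HtDForm Φ Θ → HtDForm Φ Θ

/-- The extension `[[φ]]` of an H_t(D) formula in a Kripke model `(S, R, V, N)`,
where `N` gives the valuation of nominals. -/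
def HtDExt {Φ Θ W : Type} (S : Set W) (R : Set (W × W))
    (V : Φ → Set W) (N : Θ → Set W) : HtDForm Φ Θ → Set W
  | .atom p => V p
  | .nom i => N i
  | .neg φ => S \ HtDExt S R V N φ
  | .disj φ ψ => HtDExt S R V N φ ∪ HtDExt S R V N ψ
  | .dia φ => { s | s ∈ S ∧ ∃ t, t ∈ S ∧ (s, t) ∈ R ∧ t ∈ HtDExt S R V N φ }
  | .diaInv φ => { s | s ∈ S ∧ ∃ t, t ∈ S ∧ (t, s) ∈ R ∧ t ∈ HtDExt S R V N φ }
  | .diaD φ => { s | s ∈ S ∧ ∃ t, t ∈ S ∧ t ≠ s ∧ t ∈ HtDExt S R V N φ }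

/-!
Induction on `φ`. The Boolean cases use the closure of regular languages under complement, union
and intersection; nominals denote finite languages; and `[[⟨D⟩φ]] = S ∩ {s | ∃ t ∈ A, t ≠ s}` with
`A = S ∩ [[φ]]`, where the second set is empty or cofinite whatever `A` is. For `◇` and `◇⁻`
the extension is `S ∩ R⁻¹(S ∩ [[φ]])`, resp. `S ∩ R(S ∩ [[φ]])`. If `R` is presented by `L`, then
`R(T) = p₂(L ∩ p₁⁻¹(T))`, and regularity is preserved both by images and by inverse images under the
letter-erasing morphisms `p₁ p₂`: the inverse image by running the automaton only on kept letters,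
the image by an automaton that guesses the erased letters.
-/

namespace DFA

variable {α β σ : Type*}

def comapFilterMap (g : β → Option α) (M : DFA α σ) : DFA β σ where
  step s b := (g b).elim s (M.step s)
  start := M.start
  accept := M.accept

theorem evalFrom_comapFilterMap (g : β → Option α) (M : DFA α σ) (s : σ) (z : List β) :
    (M.comapFilterMap g).evalFrom s z = M.evalFrom s (z.filterMap g) := by
  induction z generalizing s with
  | nil => rfl
  | cons b z ih => cases hb : g b <;> simp [comapFilterMap, hb, ← ih]

theorem accepts_comapFilterMap (g : β → Option α) (M : DFA α σ) :
    (M.comapFilterMap g).accepts = List.filterMap g ⁻¹' M.accepts := by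
  ext z
  exact Iff.of_eq (congrArg (· ∈ M.accept) (M.evalFrom_comapFilterMap g M.start z))

/-- Simulates `M` on some preimage under `filterMap f`: reading `a` runs `M` on any block that
`f` maps to `[a]`, erased letters included, and the start states absorb entirely erased blocks. -/
def mapFilterMap (f : β → Option α) (M : DFA β σ) : NFA α σ where
  step s a := {t | ∃ w : List β, w.filterMap f = [a] ∧ M.evalFrom s w = t}
  start := {t | ∃ w : List β, w.filterMap f = [] ∧ M.eval w = t}
  accept := M.accept

theorem mem_eval_mapFilterMap (f : β → Option α) (M : DFA β σ) (x : List α) (t : σ) :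
    t ∈ (M.mapFilterMap f).eval x ↔ ∃ z : List β, z.filterMap f = x ∧ M.eval z = t := by
  induction x using List.reverseRecOn generalizing t with
  | nil => exact Iff.rfl
  | append_singleton x a ih =>
    simp only [NFA.eval_append_singleton, NFA.mem_stepSet, ih, List.filterMap_eq_append_iff]
    constructor
    · rintro ⟨_, ⟨z, hz, rfl⟩, w, hw, rfl⟩
      exact ⟨z ++ w, ⟨z, w, rfl, hz, hw⟩, M.evalFrom_of_append _ z w⟩
    · rintro ⟨_, ⟨z, w, rfl, hz, hw⟩, rfl⟩
      exact ⟨M.eval z, ⟨z, hz, rfl⟩, w, hw, (M.evalFrom_of_append _ z w).symm⟩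

theorem accepts_mapFilterMap (f : β → Option α) (M : DFA β σ) :
    (M.mapFilterMap f).accepts = List.filterMap f '' M.accepts := by
  ext x
  constructor
  · rintro ⟨_, hacc, h⟩
    obtain ⟨z, rfl, rfl⟩ := (M.mem_eval_mapFilterMap f x _).1 h
    exact ⟨z, hacc, rfl⟩
  · rintro ⟨z, hz, rfl⟩
    exact ⟨M.eval z, hz, (M.mem_eval_mapFilterMap f _ _).2 ⟨z, rfl, rfl⟩⟩

end DFA

namespace Language

variable {α β : Type*}

theorem isRegular_of_finite {L : Language α} (hL : (L : Set (List α)).Finite) : L.IsRegular := by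
  refine .of_finite_range_leftQuotient <|
    ((hL.biUnion fun w _ => w.tails.finite_toSet).finite_subsets).subset ?_
  rintro _ ⟨x, rfl⟩ y hy
  exact Set.mem_biUnion hy ((List.mem_tails _ _).2 (List.suffix_append x y))

theorem isRegular_setOf_exists_ne (A : Set (List α)) :
    Language.IsRegular {s | ∃ t ∈ A, t ≠ s} := by
  rcases A.eq_empty_or_nonempty with rfl | ⟨a, ha⟩
  · simpa using isRegular_of_finite (Set.finite_empty (α := List α))
  · refine .of_compl (isRegular_of_finite ((Set.finite_singleton a).subset ?_))
    intro s hs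
    by_contra hsa
    exact hs ⟨a, ha, Ne.symm hsa⟩

theorem IsRegular.preimage_filterMap {L : Language α} (hL : L.IsRegular) (g : β → Option α) :
    Language.IsRegular (List.filterMap g ⁻¹' L) := by
  obtain ⟨σ, _, M, rfl⟩ := hL
  exact ⟨σ, inferInstance, M.comapFilterMap g, M.accepts_comapFilterMap g⟩

theorem IsRegular.image_filterMap {L : Language β} (hL : L.IsRegular) (f : β → Option α) :
    Language.IsRegular (List.filterMap f '' L) := by
  obtain ⟨σ, _, M, rfl⟩ := hL
  exact ⟨Set σ, inferInstance, (M.mapFilterMap f).toDFA,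
    NFA.toDFA_correct.trans (M.accepts_mapFilterMap f)⟩

end Language

namespace IsRationalRel

variable {α : Type} {R : Set (List α × List α)} {T : Language α}

theorem isRegular_image (hR : IsRationalRel R) (hT : T.IsRegular) :
    Language.IsRegular (SetRel.image R T) := by
  obtain ⟨L, hL, hRL⟩ := hR
  have h : SetRel.image R T =
      List.filterMap Prod.snd '' (L ⊓ List.filterMap Prod.fst ⁻¹' T) := by
    ext x
    rw [hRL]
    constructor
    · rintro ⟨t, ht, z, hz, hz'⟩
      obtain ⟨rfl, rfl⟩ := Prod.mk.inj hz'
      exact ⟨z, ⟨hz, ht⟩, rfl⟩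
    · rintro ⟨z, ⟨hz, ht⟩, rfl⟩
      exact ⟨_, ht, z, hz, rfl⟩
  exact h ▸ (hL.inf (hT.preimage_filterMap Prod.fst)).image_filterMap Prod.snd

theorem isRegular_preimage (hR : IsRationalRel R) (hT : T.IsRegular) :
    Language.IsRegular (SetRel.preimage R T) := by
  obtain ⟨L, hL, hRL⟩ := hR
  have h : SetRel.preimage R T =
      List.filterMap Prod.fst '' (L ⊓ List.filterMap Prod.snd ⁻¹' T) := by
    ext x
    rw [hRL]
    constructor
    · rintro ⟨t, ht, z, hz, hz'⟩
      obtain ⟨rfl, rfl⟩ := Prod.mk.inj hz'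
      exact ⟨z, ⟨hz, ht⟩, rfl⟩
    · rintro ⟨z, ⟨hz, ht⟩, rfl⟩
      exact ⟨_, ht, z, hz, rfl⟩
  exact h ▸ (hL.inf (hT.preimage_filterMap Prod.snd)).image_filterMap Prod.fst

end IsRationalRel

section HtDExt

variable {Φ Θ W : Type} (S : Set W) (R : Set (W × W)) (V : Φ → Set W) (N : Θ → Set W)
  (φ : HtDForm Φ Θ)

theorem htDExt_dia_inter_prod :
    HtDExt S (R ∩ S ×ˢ S) V N (.dia φ) =
      S ∩ SetRel.preimage R (S ∩ HtDExt S (R ∩ S ×ˢ S) V N φ) := by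
  ext s
  simp only [HtDExt]
  aesop

theorem htDExt_diaInv_inter_prod :
    HtDExt S (R ∩ S ×ˢ S) V N (.diaInv φ) =
      S ∩ SetRel.image R (S ∩ HtDExt S (R ∩ S ×ˢ S) V N φ) := by
  ext s
  simp only [HtDExt]
  aesop

theorem htDExt_diaD : HtDExt S R V N (.diaD φ) = S ∩ {s | ∃ t ∈ S ∩ HtDExt S R V N φ, t ≠ s} := by
  ext s
  simp only [HtDExt]
  aesop

end HtDExt

theorem htDExt_isRegular_of_rationalModel_general {α Φ Θ : Type}
    (S : Set (List α)) (hS : Language.IsRegular S)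
    (R : Set (List α × List α)) (hR : IsRationalRel R)
    (V : Φ → Set (List α)) (hV : ∀ p, Language.IsRegular (V p))
    (N : Θ → Set (List α)) (hN : ∀ i, ∃ w, N i = {w})
    (φ : HtDForm Φ Θ) :
    Language.IsRegular (HtDExt S (R ∩ S ×ˢ S) V N φ) := by
  induction φ with
  | atom p => exact hV p
  | nom i =>
    obtain ⟨w, hw⟩ := hN i
    simpa only [HtDExt, hw] using Language.isRegular_of_finite (Set.finite_singleton w)
  | neg φ ih => exact hS.inf ih.compl
  | disj φ ψ ih₁ ih₂ => exact ih₁.add ih₂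
  | dia φ ih =>
    rw [htDExt_dia_inter_prod]
    exact hS.inf (hR.isRegular_preimage (hS.inf ih))
  | diaInv φ ih =>
    rw [htDExt_diaInv_inter_prod]
    exact hS.inf (hR.isRegular_image (hS.inf ih))
  | diaD φ ih =>
    rw [htDExt_diaD]
    exact hS.inf (Language.isRegular_setOf_exists_ne _)

/-- In a rational Kripke model over a finite alphabet in which every
nominal is evaluated in a singleton subset of `S`, the extension of every H_t(D)
formula is a regular language. -/
theorem htDExt_isRegular_of_rationalModel {α Φ Θ : Type} [Fintype α]
    (S : Set (List α)) (hS : Language.IsRegular S)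
    (R : Set (List α × List α)) (hR : IsRationalRel R)
    (V : Φ → Set (List α)) (hV : ∀ p, Language.IsRegular (V p)) (hVS : ∀ p, V p ⊆ S)
    (N : Θ → Set (List α)) (hN : ∀ i, ∃ w, N i = {w}) (hNS : ∀ i, N i ⊆ S)
    (φ : HtDForm Φ Θ) :
    Language.IsRegular (HtDExt S (R ∩ S ×ˢ S) V N φ) :=
  htDExt_isRegular_of_rationalModel_general S hS R hR V hV N hN φ
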